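/- arXiv:2004.03665 — 3 statements merged into one kernel-verified Lean document; each statement's English description precedes it below -/
import Mathlib

section
/- Suppose q : 𝕏 ⊆ ℝⁿ → ℝᵐ admits a global affine abstraction, i.e., there exist a matrix 𝔸 ∈ ℝ^{m×n} and vectors e, ē ∈ ℝᵐ such that 𝔸ζ + e ≤ q(ζ) ≤ 𝔸ζ + ē for all ζ ∈ 𝕏, where |𝔸| denotes the entrywise absolute value of 𝔸. Then for any ζ₁, ζ₂ ∈ 𝕏 with ζ ≤ ζ₁, ζ₂ ≤ ζ̄ for some ζ, ζ̄ ∈ 𝕏, we have q(ζ₁) − q(ζ₂) ≤ |𝔸|·(ζ̄ − ζ) + (ē − e) componentwise. -/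
theorem affine_abstraction_growth_bound {n m : ℕ}
    (X : Set (Fin n → ℝ)) (q : (Fin n → ℝ) → (Fin m → ℝ))
    (A : Matrix (Fin m) (Fin n) ℝ) (el eu : Fin m → ℝ)
    (habs : ∀ ζ ∈ X, A.mulVec ζ + el ≤ q ζ ∧ q ζ ≤ A.mulVec ζ + eu)
    (ζ₁ ζ₂ ζl ζu : Fin n → ℝ)
    (h1 : ζ₁ ∈ X) (h2 : ζ₂ ∈ X) (hlX : ζl ∈ X) (huX : ζu ∈ X)
    (h1l : ζl ≤ ζ₁) (h1u : ζ₁ ≤ ζu) (h2l : ζl ≤ ζ₂) (h2u : ζ₂ ≤ ζu) :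
    q ζ₁ - q ζ₂ ≤ (Matrix.of fun i j => |A i j|).mulVec (ζu - ζl) + (eu - el) := by
  intro i
  have hu := (habs ζ₁ h1).2 i
  have hl := (habs ζ₂ h2).1 i
  have key : A.mulVec ζ₁ i - A.mulVec ζ₂ i ≤
      (Matrix.of fun i j => |A i j|).mulVec (ζu - ζl) i := by
    simp only [Matrix.mulVec, dotProduct, Matrix.of_apply, ← Finset.sum_sub_distrib,
      ← mul_sub]
    apply Finset.sum_le_sum
    intro j _
    have : |A i j * (ζ₁ j - ζ₂ j)| ≤ |A i j| * ((ζu - ζl) j) := by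
      rw [abs_mul]
      apply mul_le_mul_of_nonneg_left _ (abs_nonneg _)
      rw [abs_le]
      constructor <;> simp only [Pi.sub_apply] <;> nlinarith [h1l j, h1u j, h2l j, h2u j]
    exact le_trans (le_abs_self _) this
  simp only [Pi.sub_apply, Pi.add_apply] at *
  linarith
end

section
/- Let q : 𝕏 ⊆ ℝⁿ → ℝᵐ be mixed monotone with decomposition function of the form q_d(x,y) = q(z(x,y)) + Cᵠ(x − y), where z(x,y) ∈ [min(x,y), max(x,y)] componentwise and Cᵠ ∈ ℝ^{m×n} is a fixed nonnegative matrix. Suppose q admits a global affine abstraction: 𝔸ζ + e ≤ q(ζ) ≤ 𝔸ζ + ē for all ζ ∈ 𝕏. Then for any ordered pair ζ ≤ ζ̄ in 𝕏 with z(ζ̄, ζ) and z(ζ, ζ̄) both lying in [ζ, ζ̄], we have q_d(ζ̄, ζ) − q_d(ζ, ζ̄) ≤ (|𝔸| + 2Cᵠ)(ζ̄ − ζ) + (ē − e) componentwise. -/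
theorem decomposition_function_growth_bound {n m : ℕ}
    (X : Set (Fin n → ℝ)) (q : (Fin n → ℝ) → (Fin m → ℝ))
    (z : (Fin n → ℝ) → (Fin n → ℝ) → (Fin n → ℝ))
    (C : Matrix (Fin m) (Fin n) ℝ) (hC : ∀ i j, 0 ≤ C i j)
    (qd : (Fin n → ℝ) → (Fin n → ℝ) → (Fin m → ℝ))
    (hqd : ∀ x y, qd x y = q (z x y) + C.mulVec (x - y))
    (A : Matrix (Fin m) (Fin n) ℝ) (el eu : Fin m → ℝ)
    (habs : ∀ ζ ∈ X, A.mulVec ζ + el ≤ q ζ ∧ q ζ ≤ A.mulVec ζ + eu)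
    (ζl ζu : Fin n → ℝ) (hord : ζl ≤ ζu) (hlX : ζl ∈ X) (huX : ζu ∈ X)
    (hz1X : z ζu ζl ∈ X) (hz2X : z ζl ζu ∈ X)
    (hz1l : ζl ≤ z ζu ζl) (hz1u : z ζu ζl ≤ ζu)
    (hz2l : ζl ≤ z ζl ζu) (hz2u : z ζl ζu ≤ ζu) :
    qd ζu ζl - qd ζl ζu ≤
      ((Matrix.of fun i j => |A i j|) + 2 • C).mulVec (ζu - ζl) + (eu - el) := by
  intro i
  rw [two_nsmul]
  have h1 := (habs _ hz1X).2 i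
  have h2 := (habs _ hz2X).1 i
  have hA : A.mulVec (z ζu ζl) i - A.mulVec (z ζl ζu) i ≤
      (Matrix.of fun i j => |A i j|).mulVec (ζu - ζl) i := by
    simp only [Matrix.mulVec, dotProduct, Matrix.of_apply, Pi.sub_apply]
    rw [← Finset.sum_sub_distrib]
    apply Finset.sum_le_sum
    intro j _
    rw [← mul_sub]
    calc A i j * (z ζu ζl j - z ζl ζu j) ≤ |A i j * (z ζu ζl j - z ζl ζu j)| :=
          le_abs_self _
      _ = |A i j| * |z ζu ζl j - z ζl ζu j| := abs_mul _ _
      _ ≤ |A i j| * (ζu j - ζl j) := by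
          apply mul_le_mul_of_nonneg_left _ (abs_nonneg _)
          rw [abs_sub_le_iff]
          constructor <;> linarith [hz1l j, hz1u j, hz2l j, hz2u j]
  have hCn : C.mulVec (ζl - ζu) i = - C.mulVec (ζu - ζl) i := by
    have : (ζl - ζu) = -(ζu - ζl) := by ring
    rw [this, Matrix.mulVec_neg, Pi.neg_apply]
  simp only [hqd, Pi.add_apply, Pi.sub_apply, Matrix.add_mulVec,
    Matrix.smul_mulVec, Pi.smul_apply, smul_eq_mul] at *
  push_cast at *
  linarith
end

section
/- Suppose g : ℝⁿ → ℝˡ, z ∈ ℝⁿ, and A ∈ ℝ^{l×n}, t̄, t ∈ ℝˡ satisfy t ≤ A·z ≤ t̄ componentwise. Let A† denote the Moore–Penrose pseudoinverse of A and suppose A†A = I (A has full column rank). Then (A†)⁺ t − (A†)⁺⁺ t̄ ≤ z ≤ (A†)⁺ t̄ − (A†)⁺⁺ t componentwise. -/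
open Matrix
/-- Entrywise positive part of a matrix. -/
noncomputable def Matrix.posPart' {m n : ℕ} (A : Matrix (Fin m) (Fin n) ℝ) :
    Matrix (Fin m) (Fin n) ℝ := Matrix.of fun i j => max (A i j) 0

/-- Entrywise negative part: `A⁺⁺ = A⁺ - A`. -/
noncomputable def Matrix.negPart' {m n : ℕ} (A : Matrix (Fin m) (Fin n) ℝ) :
    Matrix (Fin m) (Fin n) ℝ := Matrix.posPart' A - A

theorem pseudoinverse_interval_update {l n : ℕ}
    (A : Matrix (Fin l) (Fin n) ℝ) (B : Matrix (Fin n) (Fin l) ℝ)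
    -- `B` is the Moore–Penrose pseudoinverse `A†` of `A`
    (hMP1 : A * B * A = A) (hMP2 : B * A * B = B)
    (hMP3 : (A * B)ᵀ = A * B) (hMP4 : (B * A)ᵀ = B * A)
    -- full column rank: `A† A = I`
    (hfull : B * A = 1)
    (z : Fin n → ℝ) (tl tu : Fin l → ℝ)
    (hlo : tl ≤ A.mulVec z) (hhi : A.mulVec z ≤ tu) :
    (Matrix.posPart' B).mulVec tl - (Matrix.negPart' B).mulVec tu ≤ z ∧
    z ≤ (Matrix.posPart' B).mulVec tu - (Matrix.negPart' B).mulVec tl := by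
  have hz : B.mulVec (A.mulVec z) = z := by
    rw [Matrix.mulVec_mulVec, hfull, Matrix.one_mulVec]
  have hpos : ∀ i j, 0 ≤ Matrix.posPart' B i j := fun i j => le_max_right _ _
  have hneg : ∀ i j, 0 ≤ Matrix.negPart' B i j := fun i j => by
    simp [Matrix.negPart', Matrix.posPart']
  have hdiff : ∀ i j, B i j = Matrix.posPart' B i j - Matrix.negPart' B i j := by
    intro i j; simp [Matrix.negPart']
  constructor <;> intro i <;>
  · have := congrFun hz i
    simp only [Pi.sub_apply, Matrix.mulVec, dotProduct] at this ⊢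
    rw [← this, ← Finset.sum_sub_distrib]
    apply Finset.sum_le_sum
    intro j _
    rw [hdiff i j, sub_mul]
    have h1 := hlo j
    have h2 := hhi j
    simp only [Matrix.mulVec, dotProduct] at h1 h2
    nlinarith [hpos i j, hneg i j, mul_le_mul_of_nonneg_left h1 (hpos i j),
      mul_le_mul_of_nonneg_left h2 (hneg i j),
      mul_le_mul_of_nonneg_left h2 (hpos i j),
      mul_le_mul_of_nonneg_left h1 (hneg i j)]
end
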